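/- Under the standing hypotheses (k > 2, σ > 0, P a convex n-gon with monotone error function ψ, φ_k(P) > σ, and φ_k(R) ≤ σ for every proper subpolygon R of P), for every vertex p there is exactly one chord starting at p and exactly one chord ending at p, and there exists an integer m > 1 such that every chord is of the form (v_i, v_{i+m}); equivalently, for every i the diagonal (v_i, v_{i+m}) is feasible and (v_i, v_{i+m+1}) is not feasible. -/
import Mathlib


/-!
STATEMENT 10: Under the standing hypotheses (k > 2, σ > 0, P a convex n-gon with
monotone error function ψ, φ_k(P) > σ, and φ_k(R) ≤ σ for every proper
subpolygon R of P), for every vertex p there is exactly one chord starting at p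
and exactly one chord ending at p, and there exists an integer m > 1 such that
every chord is of the form (v_i, v_{i+m}); equivalently, for every i the
diagonal (v_i, v_{i+m}) is a chord (it is feasible and (v_i, v_{i+m+1}) is not
feasible).
-/

noncomputable section

abbrev Pt := EuclideanSpace ℝ (Fin 2)

/-- `ccw3 a b c` : the triple `(a, b, c)` is positively (counterclockwise) oriented. -/
def ccw3 (a b c : Pt) : Prop :=
  0 < (b 0 - a 0) * (c 1 - a 1) - (b 1 - a 1) * (c 0 - a 0)

/-- `CBtw i j l` : in the counterclockwise cyclic order of `ZMod n`, a traversal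
starting at `i` meets `j` strictly after `i` and strictly before `l`. -/
def CBtw {n : ℕ} (i j l : ZMod n) : Prop :=
  0 < (j - i).val ∧ (j - i).val < (l - i).val

/-- The points `v 0, v 1, …, v (n-1)` are the vertices, in counterclockwise order,
of a convex `n`-gon. -/
def ConvexCCW {n : ℕ} (v : ZMod n → Pt) : Prop :=
  ∀ i j l : ZMod n, CBtw i j l → ccw3 (v i) (v j) (v l)

/-- The approximation error `φ(W, S)` of the subpolygon with vertex index set `W`
by the subpolygon with vertex index set `S ⊆ W`, for the error function `ψ`. -/
def phiSet {n : ℕ} (ψ : ZMod n → ZMod n → ZMod n → ℝ) (W S : Finset (ZMod n)) : ℝ :=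
  sSup {x | ∃ u s t : ZMod n, u ∈ W ∧ u ∉ S ∧ s ∈ S ∧ t ∈ S ∧ CBtw s u t ∧
    (∀ y ∈ S, ¬ CBtw s y t) ∧ x = ψ u s t}

/-- `φ_k` of the subpolygon with vertex index set `W`. -/
def phiK {n : ℕ} (ψ : ZMod n → ZMod n → ZMod n → ℝ) (k : ℕ) (W : Finset (ZMod n)) : ℝ :=
  if W.card ≤ k then 0
  else sInf {x | ∃ S : Finset (ZMod n), S ⊆ W ∧ S.card = k ∧ x = phiSet ψ W S}

/-- The diagonal `(p, q)` is feasible for error level `σ`: `ψ x p q ≤ σ` for every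
vertex `x` with `p ≺ x ≺ q`. -/
def Feasible {n : ℕ} (ψ : ZMod n → ZMod n → ZMod n → ℝ) (σ : ℝ) (p q : ZMod n) : Prop :=
  ∀ x : ZMod n, CBtw p x q → ψ x p q ≤ σ

/-- The diagonal `(p, q)` is a chord: it is feasible and it is the longest feasible
diagonal starting at `p`. -/
def IsChord {n : ℕ} (ψ : ZMod n → ZMod n → ZMod n → ℝ) (σ : ℝ) (p q : ZMod n) : Prop :=
  p ≠ q ∧ Feasible ψ σ p q ∧
    ∀ q' : ZMod n, (q - p).val < (q' - p).val → ¬ Feasible ψ σ p q'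

set_option linter.unusedVariables false
set_option linter.unusedSectionVars false
set_option linter.unusedTactic false
section AuxChord


open Finset

namespace ChordAux

variable {n : ℕ} [NeZero n]

lemma off_val (p : ZMod n) {a : ℕ} (ha : a < n) : ((p + (a : ZMod n)) - p).val = a := by
  have h : p + (a : ZMod n) - p = (a : ZMod n) := by ring
  rw [h, ZMod.val_cast_of_lt ha]

lemma off_inj (p : ZMod n) {a b : ℕ} (ha : a < n) (hb : b < n)
    (h : p + (a : ZMod n) = p + (b : ZMod n)) : a = b := by
  have h2 : (a : ZMod n) = (b : ZMod n) := by
    have := add_left_cancel h; exact this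
  have := congrArg ZMod.val h2
  rwa [ZMod.val_cast_of_lt ha, ZMod.val_cast_of_lt hb] at this

lemma point_decomp (p x : ZMod n) : x = p + (((x - p).val : ℕ) : ZMod n) := by
  rw [ZMod.natCast_val, ZMod.cast_id]; ring

lemma cbtw_iff (p x : ZMod n) {d : ℕ} (hd : d < n) :
    CBtw p x (p + (d : ZMod n)) ↔ 0 < (x - p).val ∧ (x - p).val < d := by
  unfold CBtw; rw [off_val p hd]

lemma cbtw_off (p : ZMod n) {c d : ℕ} (hc0 : 0 < c) (hcd : c < d) (hd : d < n) :
    CBtw p (p + (c : ZMod n)) (p + (d : ZMod n)) := by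
  rw [cbtw_iff p _ hd, off_val p (lt_trans hcd hd)]
  exact ⟨hc0, hcd⟩

variable (ψ : ZMod n → ZMod n → ZMod n → ℝ) (σ : ℝ)

section Mono
variable (hψmono : ∀ u s t s' t' : ZMod n, CBtw s u t →
      (s' - s).val < (u - s).val → (u - s).val < (t' - s).val →
      (t' - s).val ≤ (t - s).val → ψ u s' t' ≤ ψ u s t)

include hψmono

lemma psi_mono_off (p : ZMod n) {a b c d : ℕ} (hac : a < c) (hcb : c < b) (hbd : b ≤ d)
    (hdn : d < n) :
    ψ (p + (c : ZMod n)) (p + (a : ZMod n)) (p + (b : ZMod n)) ≤ ψ (p + (c : ZMod n)) p (p + (d : ZMod n)) := by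
  have hcn : c < n := lt_of_lt_of_le (lt_of_lt_of_le hcb hbd) hdn.le
  have hbn : b < n := lt_of_le_of_lt hbd hdn
  have han : a < n := lt_trans hac hcn
  apply hψmono _ _ _ _ _ (cbtw_off p (by omega) (by omega) hdn)
  · rw [off_val p han, off_val p hcn]; exact hac
  · rw [off_val p hcn, off_val p hbn]; exact hcb
  · rw [off_val p hbn, off_val p hdn]; exact hbd

lemma feas_shrink (p : ZMod n) {a b d : ℕ} (hab : a < b) (hbd : b ≤ d) (hdn : d < n)
    (h : Feasible ψ σ p (p + (d : ZMod n))) :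
    Feasible ψ σ (p + (a : ZMod n)) (p + (b : ZMod n)) := by
  intro x hx
  have hban : b - a < n := lt_of_le_of_lt (Nat.sub_le _ _) (lt_of_le_of_lt hbd hdn)
  have hba : (p + (b : ZMod n)) - (p + (a : ZMod n)) = ((b - a : ℕ) : ZMod n) := by
    push_cast [Nat.cast_sub hab.le]; ring
  unfold CBtw at hx
  rw [hba, ZMod.val_cast_of_lt hban] at hx
  set c' := (x - (p + (a : ZMod n))).val with hc'
  have hx_eq : x = p + ((a + c' : ℕ) : ZMod n) := by
    have h1 := point_decomp (p + (a : ZMod n)) x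
    rw [h1]; push_cast; ring
  have h1 : ψ x (p + (a : ZMod n)) (p + (b : ZMod n)) ≤ ψ x p (p + (d : ZMod n)) := by
    rw [hx_eq]
    exact psi_mono_off ψ hψmono p (by omega) (by omega) hbd hdn
  refine le_trans h1 (h x ?_)
  rw [hx_eq]
  exact cbtw_off p (by omega) (by omega) hdn

end Mono

open Classical in
def okS (p : ZMod n) : Finset ℕ :=
  (Finset.range n).filter (fun d => 0 < d ∧ Feasible ψ σ p (p + (d : ZMod n)))

lemma feas_one (hn1 : 1 < n) (p : ZMod n) : Feasible ψ σ p (p + ((1 : ℕ) : ZMod n)) := by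
  intro x hx
  rw [cbtw_iff p x hn1] at hx
  omega

lemma okS_nonempty (hn1 : 1 < n) (p : ZMod n) : (okS ψ σ p).Nonempty := by
  refine ⟨1, ?_⟩
  simp only [okS, mem_filter, mem_range]
  exact ⟨hn1, Nat.one_pos, by simpa using feas_one ψ σ hn1 p⟩

def ell (p : ZMod n) : ℕ :=
  if h : (okS ψ σ p).Nonempty then (okS ψ σ p).max' h else 1

variable {ψ σ}

lemma ell_mem (hn1 : 1 < n) (p : ZMod n) : ell ψ σ p ∈ okS ψ σ p := by
  rw [ell, dif_pos (okS_nonempty ψ σ hn1 p)]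
  exact Finset.max'_mem _ _

lemma ell_pos (hn1 : 1 < n) (p : ZMod n) : 0 < ell ψ σ p := by
  have := ell_mem (ψ := ψ) (σ := σ) hn1 p
  simp only [okS, mem_filter] at this; exact this.2.1

lemma ell_lt (hn1 : 1 < n) (p : ZMod n) : ell ψ σ p < n := by
  have := ell_mem (ψ := ψ) (σ := σ) hn1 p
  simp only [okS, mem_filter, mem_range] at this; exact this.1

lemma feas_ell (hn1 : 1 < n) (p : ZMod n) : Feasible ψ σ p (p + ((ell ψ σ p : ℕ) : ZMod n)) := by
  have := ell_mem (ψ := ψ) (σ := σ) hn1 p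
  simp only [okS, mem_filter] at this; exact this.2.2

lemma le_ell (hn1 : 1 < n) (p : ZMod n) {d : ℕ} (h0 : 0 < d) (hdn : d < n)
    (hf : Feasible ψ σ p (p + (d : ZMod n))) : d ≤ ell ψ σ p := by
  rw [ell, dif_pos (okS_nonempty ψ σ hn1 p)]
  apply Finset.le_max'
  simp only [okS, mem_filter, mem_range]
  exact ⟨hdn, h0, hf⟩

lemma not_feas_of_ell_lt (hn1 : 1 < n) (p : ZMod n) {d : ℕ} (h : ell ψ σ p < d) (hdn : d < n) :
    ¬ Feasible ψ σ p (p + (d : ZMod n)) := fun hf =>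
  absurd (le_ell hn1 p (by omega) hdn hf) (by omega)

lemma exists_blocker (hn1 : 1 < n) (p : ZMod n) {d : ℕ} (h : ell ψ σ p < d) (hdn : d < n) :
    ∃ u, CBtw p u (p + (d : ZMod n)) ∧ σ < ψ u p (p + (d : ZMod n)) := by
  have := not_feas_of_ell_lt hn1 p h hdn
  unfold Feasible at this
  push_neg at this
  exact this

variable (ψ σ)

open Classical in
def bokS (q : ZMod n) : Finset ℕ :=
  (Finset.range n).filter (fun d => 0 < d ∧ Feasible ψ σ (q - (d : ZMod n)) q)

lemma bokS_nonempty (hn1 : 1 < n) (q : ZMod n) : (bokS ψ σ q).Nonempty := by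
  refine ⟨1, ?_⟩
  simp only [bokS, mem_filter, mem_range]
  refine ⟨hn1, Nat.one_pos, ?_⟩
  intro x hx
  unfold CBtw at hx
  have he : q - (q - ((1:ℕ) : ZMod n)) = ((1:ℕ) : ZMod n) := by ring
  rw [he, ZMod.val_cast_of_lt hn1] at hx
  omega

def bell (q : ZMod n) : ℕ :=
  if h : (bokS ψ σ q).Nonempty then (bokS ψ σ q).max' h else 1

variable {ψ σ}

lemma bell_mem (hn1 : 1 < n) (q : ZMod n) : bell ψ σ q ∈ bokS ψ σ q := by
  rw [bell, dif_pos (bokS_nonempty ψ σ hn1 q)]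
  exact Finset.max'_mem _ _

lemma bell_pos (hn1 : 1 < n) (q : ZMod n) : 0 < bell ψ σ q := by
  have := bell_mem (ψ := ψ) (σ := σ) hn1 q
  simp only [bokS, mem_filter] at this; exact this.2.1

lemma bell_lt (hn1 : 1 < n) (q : ZMod n) : bell ψ σ q < n := by
  have := bell_mem (ψ := ψ) (σ := σ) hn1 q
  simp only [bokS, mem_filter, mem_range] at this; exact this.1

lemma feas_bell (hn1 : 1 < n) (q : ZMod n) :
    Feasible ψ σ (q - ((bell ψ σ q : ℕ) : ZMod n)) q := by
  have := bell_mem (ψ := ψ) (σ := σ) hn1 q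
  simp only [bokS, mem_filter] at this; exact this.2.2

lemma le_bell (hn1 : 1 < n) (q : ZMod n) {d : ℕ} (h0 : 0 < d) (hdn : d < n)
    (hf : Feasible ψ σ (q - (d : ZMod n)) q) : d ≤ bell ψ σ q := by
  rw [bell, dif_pos (bokS_nonempty ψ σ hn1 q)]
  apply Finset.le_max'
  simp only [bokS, mem_filter, mem_range]
  exact ⟨hdn, h0, hf⟩

lemma exists_blocker_b (hn1 : 1 < n) (q : ZMod n) {d : ℕ} (h : bell ψ σ q < d) (hdn : d < n) :
    ∃ u, CBtw (q - (d : ZMod n)) u q ∧ σ < ψ u (q - (d : ZMod n)) q := by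
  have hnf : ¬ Feasible ψ σ (q - (d : ZMod n)) q := fun hf =>
    absurd (le_bell hn1 q (by omega) hdn hf) (by omega)
  unfold Feasible at hnf
  push_neg at hnf
  exact hnf

end ChordAux
namespace ChordAux

variable {n : ℕ} [NeZero n] {ψ : ZMod n → ZMod n → ZMod n → ℝ} {σ : ℝ}

lemma phiSet_le (hσ0 : 0 ≤ σ) {W S : Finset (ZMod n)}
    (h : ∀ u s t : ZMod n, u ∈ W → u ∉ S → s ∈ S → t ∈ S → CBtw s u t →
      (∀ y ∈ S, ¬ CBtw s y t) → ψ u s t ≤ σ) : phiSet ψ W S ≤ σ := by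
  apply Real.sSup_le _ hσ0
  rintro x ⟨u, s, t, h1, h2, h3, h4, h5, h6, rfl⟩
  exact h u s t h1 h2 h3 h4 h5 h6

lemma le_phiSet {W S : Finset (ZMod n)} {u s t : ZMod n}
    (h1 : u ∈ W) (h2 : u ∉ S) (h3 : s ∈ S) (h4 : t ∈ S) (h5 : CBtw s u t)
    (h6 : ∀ y ∈ S, ¬ CBtw s y t) : ψ u s t ≤ phiSet ψ W S := by
  refine le_csSup ?_ ⟨u, s, t, h1, h2, h3, h4, h5, h6, rfl⟩
  refine BddAbove.mono ?_
    ((Set.finite_range (fun y : ZMod n × ZMod n × ZMod n => ψ y.1 y.2.1 y.2.2)).bddAbove)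
  rintro x ⟨u', s', t', _, _, _, _, _, _, rfl⟩
  exact ⟨(u', s', t'), rfl⟩

lemma phiSet_nonneg (hψ0 : ∀ u s t : ZMod n, CBtw s u t → 0 ≤ ψ u s t)
    (W S : Finset (ZMod n)) : 0 ≤ phiSet ψ W S := by
  apply Real.sSup_nonneg
  rintro x ⟨u, s, t, _, _, _, _, h5, _, rfl⟩
  exact hψ0 u s t h5

lemma phiK_le_of_good (hψ0 : ∀ u s t : ZMod n, CBtw s u t → 0 ≤ ψ u s t)
    {k : ℕ} (hkn : k < n) {S : Finset (ZMod n)} (hcard : S.card = k)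
    (hS : phiSet ψ Finset.univ S ≤ σ) : phiK ψ k Finset.univ ≤ σ := by
  rw [phiK, if_neg (by rw [Finset.card_univ, ZMod.card n]; omega)]
  refine le_trans (csInf_le ⟨0, ?_⟩ ⟨S, Finset.subset_univ _, hcard, rfl⟩) hS
  rintro x ⟨S', _, _, rfl⟩
  exact phiSet_nonneg hψ0 _ _

lemma exists_good_of_phiK_le {k : ℕ} {W : Finset (ZMod n)} (hW : k < W.card)
    (h : phiK ψ k W ≤ σ) : ∃ S : Finset (ZMod n), S ⊆ W ∧ S.card = k ∧ phiSet ψ W S ≤ σ := by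
  rw [phiK, if_neg (by omega)] at h
  set A := {x | ∃ S : Finset (ZMod n), S ⊆ W ∧ S.card = k ∧ x = phiSet ψ W S} with hA
  have hne : A.Nonempty := by
    obtain ⟨S, hS, hc⟩ := Finset.exists_subset_card_eq hW.le
    exact ⟨_, S, hS, hc, rfl⟩
  have hfin : A.Finite := by
    apply Set.Finite.subset (Set.finite_range (fun S : Finset (ZMod n) => phiSet ψ W S))
    rintro x ⟨S, _, _, rfl⟩
    exact ⟨S, rfl⟩
  obtain ⟨S, h1, h2, heq⟩ := hne.csInf_mem hfin
  exact ⟨S, h1, h2, heq ▸ h⟩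

lemma isChord_iff (hn1 : 1 < n) (p q : ZMod n) :
    IsChord ψ σ p q ↔ q = p + ((ell ψ σ p : ℕ) : ZMod n) := by
  constructor
  · rintro ⟨hne, hfe, hmax⟩
    set d := (q - p).val with hdd
    have hq : q = p + ((d : ℕ) : ZMod n) := point_decomp p q
    have hd0 : 0 < d := by
      rcases Nat.eq_zero_or_pos d with h | h
      · exfalso
        apply hne
        have hz : q - p = 0 := by rw [← ZMod.val_eq_zero, ← hdd, h]
        exact (sub_eq_zero.mp hz).symm
      · exact h
    have hdn : d < n := ZMod.val_lt _
    have hdle : d ≤ ell ψ σ p := le_ell hn1 p hd0 hdn (hq ▸ hfe)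
    rcases eq_or_lt_of_le hdle with h | h
    · rw [hq, h]
    · exfalso
      refine hmax (p + ((ell ψ σ p : ℕ) : ZMod n)) ?_ (feas_ell hn1 p)
      rw [off_val p (ell_lt hn1 p)]
      exact h
  · rintro rfl
    refine ⟨?_, feas_ell hn1 p, ?_⟩
    · intro h
      have h0 : p + ((0 : ℕ) : ZMod n) = p + ((ell ψ σ p : ℕ) : ZMod n) := by
        simpa using h
      have := off_inj p (by omega) (ell_lt hn1 p) h0
      exact absurd this.symm (by have := ell_pos (ψ := ψ) (σ := σ) hn1 p; omega)
    · intro q' hlt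
      rw [off_val p (ell_lt hn1 p)] at hlt
      rw [point_decomp p q']
      exact not_feas_of_ell_lt hn1 p hlt (ZMod.val_lt _)

end ChordAux

namespace ChordAux

variable {n : ℕ} [NeZero n] {ψ : ZMod n → ZMod n → ZMod n → ℝ} {σ : ℝ}

lemma val_one' (hn1 : 1 < n) : (1 : ZMod n).val = 1 := by
  haveI : Fact (1 < n) := ⟨hn1⟩; exact ZMod.val_one n

lemma ell_const {k : ℕ} (hk : 2 < k) (hn : 3 ≤ n)
    (hψ0 : ∀ u s t : ZMod n, CBtw s u t → 0 ≤ ψ u s t)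
    (hψmono : ∀ u s t s' t' : ZMod n, CBtw s u t →
      (s' - s).val < (u - s).val → (u - s).val < (t' - s).val →
      (t' - s).val ≤ (t - s).val → ψ u s' t' ≤ ψ u s t)
    (hσ : 0 < σ)
    (hP : σ < phiK ψ k Finset.univ)
    (hsub : ∀ W : Finset (ZMod n), W ⊂ Finset.univ → phiK ψ k W ≤ σ) :
    ∀ p q : ZMod n, ell ψ σ p = ell ψ σ q := by
  have hn1 : 1 < n := by omega
  have hkn : k < n := by
    by_contra hnk
    rw [phiK, if_pos (by rw [Finset.card_univ, ZMod.card n]; omega)] at hP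
    linarith
  -- Step A: p ↦ p + ell p is injective.
  have hfinj : Function.Injective (fun p : ZMod n => p + ((ell ψ σ p : ℕ) : ZMod n)) := by
    rcases eq_or_lt_of_le (show k + 1 ≤ n by omega) with hcase | hcase
    · -- n = k + 1 : we show ell ≡ 1, hence f = +1 which is injective
      have hone : ∀ p : ZMod n, ell ψ σ p = 1 := by
        intro p
        by_contra hne1
        have h2 : 2 ≤ ell ψ σ p := by have := ell_pos (ψ := ψ) (σ := σ) hn1 p; omega
        set S := Finset.univ.erase (p + 1) with hS
        have hcard : S.card = k := by
          rw [hS, Finset.card_erase_of_mem (Finset.mem_univ _), Finset.card_univ, ZMod.card n]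
          omega
        have hfeas2 : Feasible ψ σ p (p + ((2 : ℕ) : ZMod n)) := by
          have := feas_shrink ψ σ hψmono p (a := 0) (b := 2) (d := ell ψ σ p)
            (by omega) h2 (ell_lt hn1 p) (feas_ell hn1 p)
          simpa using this
        have hgood : phiSet ψ Finset.univ S ≤ σ := by
          apply phiSet_le hσ.le
          intro u s t _ h2' h3 h4 h5 h6
          have hu : u = p + 1 := by
            by_contra hc
            exact h2' (Finset.mem_erase.mpr ⟨hc, Finset.mem_univ _⟩)
          obtain ⟨hc0, hcd⟩ := h5
          have hsp : s = p := by
            by_contra hsp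
            have hmem : s + 1 ∈ S := by
              refine Finset.mem_erase.mpr ⟨?_, Finset.mem_univ _⟩
              intro he
              exact hsp (add_right_cancel he)
            apply h6 (s + 1) hmem
            have he : s + 1 - s = (1 : ZMod n) := by ring
            constructor
            · rw [he, val_one' hn1]; omega
            · rw [he, val_one' hn1]; omega
          have hd2 : (t - s).val = 2 := by
            by_contra hd
            have hd3 : 3 ≤ (t - s).val := by omega
            have hmem : s + ((2 : ℕ) : ZMod n) ∈ S := by
              refine Finset.mem_erase.mpr ⟨?_, Finset.mem_univ _⟩
              intro he
              rw [hsp] at he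
              have he2 : p + ((2 : ℕ) : ZMod n) = p + ((1 : ℕ) : ZMod n) := by
                rw [he]; push_cast; ring
              have := off_inj p (by omega) hn1 he2
              omega
            apply h6 _ hmem
            constructor
            · rw [off_val s (by omega)]; omega
            · rw [off_val s (by omega)]; omega
          have ht : t = s + ((2 : ℕ) : ZMod n) := by
            rw [point_decomp s t, hd2]
          rw [ht, hsp]
          exact hfeas2 u (by rw [← hsp, ← ht]; exact ⟨hc0, hcd⟩)
        have := phiK_le_of_good hψ0 hkn hcard hgood
        linarith
      intro p q h
      simp only [hone] at h
      exact add_right_cancel h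
    · -- k + 2 ≤ n : the main argument
      have hPz : ∀ z : ZMod n, ∃ s : ZMod n,
          ell ψ σ s + 1 < n ∧
          CBtw s z (s + ((ell ψ σ s + 1 : ℕ) : ZMod n)) ∧
          σ < ψ z s (s + ((ell ψ σ s + 1 : ℕ) : ZMod n)) ∧
          (∀ u : ZMod n, CBtw s u (s + ((ell ψ σ s + 1 : ℕ) : ZMod n)) → u ≠ z →
            ψ u s (s + ((ell ψ σ s + 1 : ℕ) : ZMod n)) ≤ σ) := by
        intro z
        set W := Finset.univ.erase z with hW
        have hWs : W ⊂ Finset.univ := Finset.erase_ssubset (Finset.mem_univ z)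
        have hcardW : k < W.card := by
          rw [hW, Finset.card_erase_of_mem (Finset.mem_univ _), Finset.card_univ, ZMod.card n]
          omega
        obtain ⟨S, hSW, hSk, hphi⟩ := exists_good_of_phiK_le hcardW (hsub W hWs)
        by_cases hex : ∃ s t : ZMod n, s ∈ S ∧ t ∈ S ∧ CBtw s z t ∧
            (∀ y ∈ S, ¬ CBtw s y t) ∧ σ < ψ z s t
        · obtain ⟨s, t, hsS, htS, hbtw, hnb, hpsi⟩ := hex
          set d := (t - s).val with hdd
          set c := (z - s).val with hcc
          obtain ⟨hc0, hcd⟩ := hbtw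
          have hdn : d < n := ZMod.val_lt _
          have ht : t = s + ((d : ℕ) : ZMod n) := point_decomp s t
          have hz : z = s + ((c : ℕ) : ZMod n) := point_decomp s z
          have hpos : ∀ u : ZMod n, CBtw s u t → u ≠ z → ψ u s t ≤ σ := by
            intro u hu hne
            refine le_trans (le_phiSet ?_ ?_ hsS htS hu hnb) hphi
            · exact Finset.mem_erase.mpr ⟨hne, Finset.mem_univ _⟩
            · intro huS
              exact hnb u huS hu
          have hfz : Feasible ψ σ s (s + ((c : ℕ) : ZMod n)) := by
            intro x hx
            rw [cbtw_iff s x (by omega)] at hx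
            set cx := (x - s).val with hcx
            have hxe : x = s + ((cx : ℕ) : ZMod n) := point_decomp s x
            have hmono : ψ x s (s + ((c : ℕ) : ZMod n)) ≤ ψ x s (s + ((d : ℕ) : ZMod n)) := by
              rw [hxe]
              have := psi_mono_off ψ hψmono s (a := 0) (b := c) (c := cx) (d := d)
                (by omega) (by omega) (by omega) hdn
              simpa using this
            refine le_trans hmono ?_
            rw [← ht]
            refine hpos x ⟨by omega, by omega⟩ ?_
            intro he
            rw [hxe, hz] at he
            have := off_inj s (by omega) (by omega) he
            omega
          have hcell : c ≤ ell ψ σ s := le_ell hn1 s (by omega) (by omega) hfz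
          set L := ell ψ σ s with hL
          have hLd : L + 1 ≤ d := by
            by_contra hcon
            have hdL : d ≤ L := by omega
            have hfst : Feasible ψ σ s (s + ((d : ℕ) : ZMod n)) := by
              have := feas_shrink ψ σ hψmono s (a := 0) (b := d) (d := L)
                (by omega) hdL (ell_lt hn1 s) (feas_ell hn1 s)
              simpa using this
            rw [ht] at hpsi
            have := hfst z (by rw [← ht]; exact ⟨hc0, hcd⟩)
            linarith
          have hL1n : L + 1 < n := by omega
          have hstep : ∀ u : ZMod n, CBtw s u (s + ((L + 1 : ℕ) : ZMod n)) → u ≠ z →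
              ψ u s (s + ((L + 1 : ℕ) : ZMod n)) ≤ σ := by
            intro u hu hne
            rw [cbtw_iff s u hL1n] at hu
            set cu := (u - s).val with hcu
            have hue : u = s + ((cu : ℕ) : ZMod n) := point_decomp s u
            have hmono : ψ u s (s + ((L + 1 : ℕ) : ZMod n)) ≤ ψ u s (s + ((d : ℕ) : ZMod n)) := by
              rw [hue]
              have := psi_mono_off ψ hψmono s (a := 0) (b := L + 1) (c := cu) (d := d)
                (by omega) (by omega) hLd hdn
              simpa using this
            refine le_trans hmono ?_
            rw [← ht]
            exact hpos u ⟨by omega, by omega⟩ hne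
          obtain ⟨u₀, hu₀b, hu₀p⟩ := exists_blocker (ψ := ψ) (σ := σ) hn1 s (d := L + 1) (by omega) hL1n
          by_cases hu₀z : u₀ = z
          · exact ⟨s, hL1n, hu₀z ▸ hu₀b, hu₀z ▸ hu₀p, hstep⟩
          · exact absurd (hstep u₀ hu₀b hu₀z) (by linarith)
        · exfalso
          push_neg at hex
          have hgood : phiSet ψ Finset.univ S ≤ σ := by
            apply phiSet_le hσ.le
            intro u s t _ h2' h3 h4 h5 h6
            by_cases huz : u = z
            · exact huz ▸ hex s t h3 h4 (huz ▸ h5) h6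
            · refine le_trans (le_phiSet ?_ h2' h3 h4 h5 h6) hphi
              exact Finset.mem_erase.mpr ⟨huz, Finset.mem_univ _⟩
          have := phiK_le_of_good hψ0 hkn hSk hgood
          linarith
      set sf : ZMod n → ZMod n := fun z => (hPz z).choose with hsf
      have hs1 : ∀ z, ell ψ σ (sf z) + 1 < n := fun z => (hPz z).choose_spec.1
      have hs2 : ∀ z, CBtw (sf z) z ((sf z) + ((ell ψ σ (sf z) + 1 : ℕ) : ZMod n)) :=
        fun z => (hPz z).choose_spec.2.1
      have hs3 : ∀ z, σ < ψ z (sf z) ((sf z) + ((ell ψ σ (sf z) + 1 : ℕ) : ZMod n)) :=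
        fun z => (hPz z).choose_spec.2.2.1
      have hs4 : ∀ z, ∀ u : ZMod n, CBtw (sf z) u ((sf z) + ((ell ψ σ (sf z) + 1 : ℕ) : ZMod n)) →
          u ≠ z → ψ u (sf z) ((sf z) + ((ell ψ σ (sf z) + 1 : ℕ) : ZMod n)) ≤ σ :=
        fun z => (hPz z).choose_spec.2.2.2
      -- Claim I : sf is injective
      have hsinj : Function.Injective sf := by
        intro z z' he
        by_contra hne
        have h1 := hs3 z
        have h2 := hs4 z' z (by rw [← he]; exact hs2 z) hne
        rw [← he] at h2
        linarith
      -- Claim II : z ↦ sf z + (ell (sf z) + 1) is injective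
      have htinj : Function.Injective
          (fun z : ZMod n => (sf z) + ((ell ψ σ (sf z) + 1 : ℕ) : ZMod n)) := by
        intro z z' he
        simp only at he
        by_contra hne
        set q := (sf z) + ((ell ψ σ (sf z) + 1 : ℕ) : ZMod n) with hq
        have hq' : q = (sf z') + ((ell ψ σ (sf z') + 1 : ℕ) : ZMod n) := he.symm ▸ rfl
        set B := bell ψ σ q with hB
        have hBpos : 0 < B := bell_pos hn1 q
        have hBn : B < n := bell_lt hn1 q
        have hBa : ∀ (s : ZMod n), ell ψ σ s + 1 < n → q = s + ((ell ψ σ s + 1 : ℕ) : ZMod n) →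
            B + 1 ≤ ell ψ σ s + 1 := by
          intro s han hqs
          set a := ell ψ σ s + 1 with ha
          by_contra hcon
          have haB : a ≤ B := by omega
          have hfeas := feas_bell (ψ := ψ) (σ := σ) hn1 q
          have hqB : q = (q - ((B : ℕ) : ZMod n)) + ((B : ℕ) : ZMod n) := by ring
          have hshr := feas_shrink ψ σ hψmono (q - ((B : ℕ) : ZMod n))
            (a := B - a) (b := B) (d := B) (by omega) le_rfl hBn (by rw [← hqB]; exact hfeas)
          have he1 : (q - ((B : ℕ) : ZMod n)) + ((B - a : ℕ) : ZMod n) = s := by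
            have hsq : s = q - ((a : ℕ) : ZMod n) := by rw [hqs]; ring
            rw [hsq]
            push_cast [Nat.cast_sub haB]
            ring
          have he2 : (q - ((B : ℕ) : ZMod n)) + ((B : ℕ) : ZMod n) = q := by ring
          rw [he1, he2] at hshr
          rw [hqs] at hshr
          exact not_feas_of_ell_lt hn1 s (by omega) han hshr
        have hBa₁ : B + 1 ≤ ell ψ σ (sf z) + 1 := hBa (sf z) (hs1 z) hq
        have hBa₂ : B + 1 ≤ ell ψ σ (sf z') + 1 := hBa (sf z') (hs1 z') hq'
        obtain ⟨u₁, hu₁b, hu₁p⟩ := exists_blocker_b (ψ := ψ) (σ := σ) hn1 q (d := B + 1) (by omega) (by have := hs1 z; omega)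
        have hkey : ∀ (w s : ZMod n), ell ψ σ s + 1 < n →
            q = s + ((ell ψ σ s + 1 : ℕ) : ZMod n) → B + 1 ≤ ell ψ σ s + 1 →
            (∀ u : ZMod n, CBtw s u (s + ((ell ψ σ s + 1 : ℕ) : ZMod n)) → u ≠ w →
              ψ u s (s + ((ell ψ σ s + 1 : ℕ) : ZMod n)) ≤ σ) →
            u₁ ≠ w → False := by
          intro w s han hqs hBa' hposw hu₁w
          set a := ell ψ σ s + 1 with ha
          set c₁ := (u₁ - (q - ((B + 1 : ℕ) : ZMod n))).val with hc₁
          have hqB1 : q - (q - ((B + 1 : ℕ) : ZMod n)) = ((B + 1 : ℕ) : ZMod n) := by ring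
          obtain ⟨hc₁0, hc₁B⟩ := hu₁b
          rw [hqB1, ZMod.val_cast_of_lt (by omega)] at hc₁B
          have hp₁ : q - ((B + 1 : ℕ) : ZMod n) = s + ((a - (B + 1) : ℕ) : ZMod n) := by
            rw [hqs]
            push_cast [Nat.cast_sub hBa']
            ring
          have hu₁e : u₁ = s + (((a - (B + 1)) + c₁ : ℕ) : ZMod n) := by
            calc u₁ = (q - ((B + 1 : ℕ) : ZMod n)) + ((c₁ : ℕ) : ZMod n) := by
                  rw [hc₁]; exact point_decomp _ _
              _ = s + ((a - (B + 1) : ℕ) : ZMod n) + ((c₁ : ℕ) : ZMod n) := by rw [hp₁]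
              _ = s + (((a - (B + 1)) + c₁ : ℕ) : ZMod n) := by push_cast; ring
          have hmono : ψ u₁ (q - ((B + 1 : ℕ) : ZMod n)) q ≤ ψ u₁ s (s + ((a : ℕ) : ZMod n)) := by
            conv_lhs => rw [hu₁e, hp₁, hqs]
            conv_rhs => rw [hu₁e]
            have := psi_mono_off ψ hψmono s (a := a - (B + 1)) (b := a)
              (c := (a - (B + 1)) + c₁) (d := a) (by omega) (by omega) le_rfl han
            simpa using this
          have hle : ψ u₁ s (s + ((a : ℕ) : ZMod n)) ≤ σ := by
            refine hposw u₁ ?_ hu₁w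
            rw [hu₁e]
            exact cbtw_off s (by omega) (by omega) han
          linarith
        by_cases hu₁z : u₁ = z
        · exact hkey z' (sf z') (hs1 z') hq' hBa₂ (hs4 z') (hu₁z ▸ hne)
        · exact hkey z (sf z) (hs1 z) hq hBa₁ (hs4 z) hu₁z
      -- conclude f injective
      have hssurj : Function.Surjective sf := Finite.surjective_of_injective hsinj
      intro p p' hfe
      simp only at hfe
      obtain ⟨z, rfl⟩ := hssurj p
      obtain ⟨z', rfl⟩ := hssurj p'
      have : (sf z) + ((ell ψ σ (sf z) + 1 : ℕ) : ZMod n)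
          = (sf z') + ((ell ψ σ (sf z') + 1 : ℕ) : ZMod n) := by
        push_cast
        rw [← add_assoc, ← add_assoc, hfe]
      exact congrArg sf (htinj this)
  -- Step B: Lipschitz + injectivity gives monotone, hence constant
  have hlip : ∀ p : ZMod n, ell ψ σ p ≤ ell ψ σ (p + 1) := by
    intro p
    by_cases h2 : 2 ≤ ell ψ σ p
    · have hfs : Feasible ψ σ (p + ((1 : ℕ) : ZMod n)) (p + ((ell ψ σ p : ℕ) : ZMod n)) :=
        feas_shrink ψ σ hψmono p (a := 1) (b := ell ψ σ p) (d := ell ψ σ p)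
          (by omega) le_rfl (ell_lt hn1 p) (feas_ell hn1 p)
      have he : p + ((ell ψ σ p : ℕ) : ZMod n)
          = (p + ((1 : ℕ) : ZMod n)) + ((ell ψ σ p - 1 : ℕ) : ZMod n) := by
        push_cast [Nat.cast_sub (by omega : 1 ≤ ell ψ σ p)]
        ring
      rw [he] at hfs
      have hge : ell ψ σ p - 1 ≤ ell ψ σ (p + 1) := by
        have := le_ell hn1 (p + ((1 : ℕ) : ZMod n)) (d := ell ψ σ p - 1) (by omega)
          (by have := ell_lt (ψ := ψ) (σ := σ) hn1 p; omega) hfs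
        simpa using this
      have hneq : ell ψ σ (p + 1) ≠ ell ψ σ p - 1 := by
        intro heq
        have hfp : p + ((ell ψ σ p : ℕ) : ZMod n)
            = (p + 1) + ((ell ψ σ (p + 1) : ℕ) : ZMod n) := by
          rw [heq]
          push_cast [Nat.cast_sub (by omega : 1 ≤ ell ψ σ p)]
          ring
        have := hfinj hfp
        have h10 : p + (1 : ZMod n) = p + 0 := by rw [← this]; ring
        have h10' := add_left_cancel h10
        have : (1 : ZMod n).val = (0 : ZMod n).val := by rw [h10']
        rw [val_one' hn1, ZMod.val_zero] at this
        omega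
      omega
    · have h1 : ell ψ σ p = 1 := by have := ell_pos (ψ := ψ) (σ := σ) hn1 p; omega
      rw [h1]
      exact ell_pos hn1 (p + 1)
  have hmono_off : ∀ (p : ZMod n) (j : ℕ), ell ψ σ p ≤ ell ψ σ (p + (j : ZMod n)) := by
    intro p j
    induction j with
    | zero => simp
    | succ i ih =>
      refine le_trans ih ?_
      have := hlip (p + (i : ZMod n))
      have he : p + (i : ZMod n) + 1 = p + ((i + 1 : ℕ) : ZMod n) := by push_cast; ring
      rwa [he] at this
  intro p q
  apply le_antisymm
  · have := hmono_off p ((q - p).val)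
    rwa [← point_decomp p q] at this
  · have := hmono_off q ((p - q).val)
    rwa [← point_decomp q p] at this

end ChordAux

namespace ChordAux

variable {n : ℕ} [NeZero n] {ψ : ZMod n → ZMod n → ZMod n → ℝ} {σ : ℝ}

lemma main_result {k : ℕ} (hk : 2 < k) (hn : 3 ≤ n)
    (hψ0 : ∀ u s t : ZMod n, CBtw s u t → 0 ≤ ψ u s t)
    (hψmono : ∀ u s t s' t' : ZMod n, CBtw s u t →
      (s' - s).val < (u - s).val → (u - s).val < (t' - s).val →
      (t' - s).val ≤ (t - s).val → ψ u s' t' ≤ ψ u s t)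
    (hσ : 0 < σ)
    (hP : σ < phiK ψ k Finset.univ)
    (hsub : ∀ W : Finset (ZMod n), W ⊂ Finset.univ → phiK ψ k W ≤ σ) :
    (∀ p : ZMod n, ∃! q : ZMod n, IsChord ψ σ p q) ∧
    (∀ q : ZMod n, ∃! p : ZMod n, IsChord ψ σ p q) ∧
    ∃ m : ℕ, 1 < m ∧ (∀ i : ZMod n, IsChord ψ σ i (i + (m : ZMod n))) ∧
      ∀ p q : ZMod n, IsChord ψ σ p q → q = p + (m : ZMod n) := by
  have hn1 : 1 < n := by omega
  have hconst := ell_const hk hn hψ0 hψmono hσ hP hsub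
  refine ⟨?_, ?_, ?_⟩
  · intro p
    exact ⟨p + ((ell ψ σ p : ℕ) : ZMod n), (isChord_iff hn1 p _).mpr rfl,
      fun q h => (isChord_iff hn1 p q).mp h⟩
  · intro q
    have hIs : IsChord ψ σ (q - ((ell ψ σ q : ℕ) : ZMod n)) q := by
      rw [isChord_iff hn1, hconst (q - ((ell ψ σ q : ℕ) : ZMod n)) q]
      ring
    refine ⟨_, hIs, ?_⟩
    intro p hp
    rw [isChord_iff hn1] at hp
    have h2 : ell ψ σ q = ell ψ σ p := hconst q p
    rw [h2, hp]
    ring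
  · by_cases h2 : 2 ≤ ell ψ σ (0 : ZMod n)
    · refine ⟨ell ψ σ (0 : ZMod n), h2, ?_, ?_⟩
      · intro i
        rw [isChord_iff hn1, hconst (0 : ZMod n) i]
      · intro p q h
        rw [isChord_iff hn1] at h
        rw [h, hconst p (0 : ZMod n)]
    · have h1 : ell ψ σ (0 : ZMod n) = 1 := by
        have := ell_pos (ψ := ψ) (σ := σ) hn1 (0 : ZMod n)
        omega
      refine ⟨n + 1, by omega, ?_, ?_⟩
      · intro i
        rw [isChord_iff hn1, hconst i (0 : ZMod n), h1]
        push_cast [ZMod.natCast_self]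
        ring_nf
      · intro p q h
        rw [isChord_iff hn1] at h
        rw [h, hconst p (0 : ZMod n), h1]
        push_cast [ZMod.natCast_self]
        ring_nf

end ChordAux

end AuxChord

theorem chord_graph_structure (k n : ℕ) [NeZero n] (hk : 2 < k) (hn : 3 ≤ n)
    (v : ZMod n → Pt) (hconv : ConvexCCW v)
    (ψ : ZMod n → ZMod n → ZMod n → ℝ)
    (hψ0 : ∀ u s t : ZMod n, CBtw s u t → 0 ≤ ψ u s t)
    (hψmono : ∀ u s t s' t' : ZMod n, CBtw s u t →
      (s' - s).val < (u - s).val → (u - s).val < (t' - s).val →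
      (t' - s).val ≤ (t - s).val → ψ u s' t' ≤ ψ u s t)
    (σ : ℝ) (hσ : 0 < σ)
    (hP : σ < phiK ψ k Finset.univ)
    (hsub : ∀ W : Finset (ZMod n), W ⊂ Finset.univ → phiK ψ k W ≤ σ) :
    (∀ p : ZMod n, ∃! q : ZMod n, IsChord ψ σ p q) ∧
    (∀ q : ZMod n, ∃! p : ZMod n, IsChord ψ σ p q) ∧
    ∃ m : ℕ, 1 < m ∧ (∀ i : ZMod n, IsChord ψ σ i (i + (m : ZMod n))) ∧
      ∀ p q : ZMod n, IsChord ψ σ p q → q = p + (m : ZMod n) :=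
  ChordAux.main_result hk hn hψ0 hψmono hσ hP hsub
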